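/- Let K and L be line segments in ℝ² (convex hulls of two points), let λ₁, λ₂ ≥ 0, and let D = λ₁·K + λ₂·L (Minkowski sum of the scaled segments). Then V(K,L)·vol(D) = 2·V(K,D)·V(L,D); that is, equality is attained in the isomorphic planar Bezout inequality V(K,L)·vol(D) ≤ 2·V(K,D)·V(L,D). -/

import Mathlib

open MeasureTheory Pointwise

/-- The planar mixed volume `V(K,L) = (vol(K+L) − vol K − vol L)/2`. -/
noncomputable def mixedVol2 (K L : Set (EuclideanSpace ℝ (Fin 2))) : ℝ :=
  ((volume (K + L)).toReal - (volume K).toReal - (volume L).toReal) / 2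

/-!
With `u = q - p` and `v = t - s`, every set in sight is a translate of a parallelogram
`a • [0, u] + b • [0, v]` with `a, b ≥ 0`: `K` and `L` are the degenerate ones `(a, b) = (1, 0)`
and `(0, 1)`, and by convexity of segments Minkowski sums of such parallelograms just add the
coefficients. The area of `a • [0, u] + b • [0, v]` is `a b Δ` with `Δ = |det (u, v)|`, so the
mixed volume of the parallelograms with coefficients `(a, b)` and `(c, d)` is `(a d + b c) Δ / 2`.
Hence `V(K, L) = Δ / 2`, `V(K, D) = λ₂ Δ / 2`, `V(L, D) = λ₁ Δ / 2` and `vol D = λ₁ λ₂ Δ`.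
-/

theorem singleton_add_add_singleton_add {M : Type*} [AddCommMonoid M] (x y : M) (s t : Set M) :
    ({x} + s) + ({y} + t) = {x + y} + (s + t) := by
  rw [add_add_add_comm, Set.singleton_add_singleton]

section Module

variable {E : Type*} [AddCommGroup E] [Module ℝ E]

def parallelogram (u v : E) (a b : ℝ) : Set E := a • segment ℝ 0 u + b • segment ℝ 0 v

theorem smul_segment (c : ℝ) (x y : E) : c • segment ℝ x y = segment ℝ (c • x) (c • y) :=
  image_segment ℝ (LinearMap.lsmul ℝ E c).toAffineMap x y

theorem segment_eq_singleton_add (p q : E) : segment ℝ p q = {p} + segment ℝ 0 (q - p) := by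
  rw [Set.singleton_add, segment_translate_image, add_zero, add_sub_cancel]

theorem parallelogram_one_zero (u v : E) : parallelogram u v 1 0 = segment ℝ 0 u := by
  simp [parallelogram, Set.zero_smul_set ⟨0, left_mem_segment ℝ 0 v⟩]

theorem parallelogram_zero_one (u v : E) : parallelogram u v 0 1 = segment ℝ 0 v := by
  simp [parallelogram, Set.zero_smul_set ⟨0, left_mem_segment ℝ 0 u⟩]

theorem parallelogram_add_parallelogram (u v : E) {a b c d : ℝ} (ha : 0 ≤ a) (hb : 0 ≤ b)
    (hc : 0 ≤ c) (hd : 0 ≤ d) :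
    parallelogram u v a b + parallelogram u v c d = parallelogram u v (a + c) (b + d) := by
  rw [parallelogram, parallelogram, parallelogram, add_add_add_comm,
    (convex_segment 0 u).add_smul ha hc, (convex_segment 0 v).add_smul hb hd]

theorem smul_parallelogram (u v : E) (c a b : ℝ) :
    c • parallelogram u v a b = parallelogram u v (c * a) (c * b) := by
  rw [parallelogram, parallelogram, smul_add, smul_smul, smul_smul]

theorem parallelogram_eq_parallelepiped (u v : E) (a b : ℝ) :
    parallelogram u v a b = parallelepiped ![a • u, b • v] := by
  rw [parallelepiped_eq_sum_segment, Fin.sum_univ_two, parallelogram, smul_segment,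
    smul_segment, smul_zero, smul_zero]
  rfl

end Module

theorem Module.Basis.addHaar_singleton_add_parallelogram {G : Type*} [NormedAddCommGroup G]
    [NormedSpace ℝ G] [MeasurableSpace G] [BorelSpace G] (B : Module.Basis (Fin 2) ℝ G)
    (x u v : G) (a b : ℝ) :
    B.addHaar ({x} + parallelogram u v a b) = ENNReal.ofReal (|a * b| * |B.det ![u, v]|) := by
  rw [Set.singleton_add, Set.image_add_left, measure_preimage_add,
    parallelogram_eq_parallelepiped, Measure.addHaar_parallelepiped, ← abs_mul]
  have hdet : B.det ![a • u, b • v] = a * b * B.det ![u, v] := by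
    have h := B.det.map_smul_univ ![a, b] ![u, v]
    simp only [Fin.prod_univ_two, Matrix.cons_val_zero, Matrix.cons_val_one, smul_eq_mul] at h
    exact h
  rw [hdet]

local notation "ℝ²" => EuclideanSpace ℝ (Fin 2)

theorem volume_singleton_add_parallelogram (x u v : ℝ²) (a b : ℝ) :
    (volume ({x} + parallelogram u v a b)).toReal
      = |a * b| * |(EuclideanSpace.basisFun (Fin 2) ℝ).toBasis.det ![u, v]| := by
  rw [← (EuclideanSpace.basisFun (Fin 2) ℝ).addHaar_eq_volume,
    Module.Basis.addHaar_singleton_add_parallelogram, ENNReal.toReal_ofReal (by positivity)]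

theorem mixedVol2_singleton_add_parallelogram (x y u v : ℝ²) {a b c d : ℝ} (ha : 0 ≤ a)
    (hb : 0 ≤ b) (hc : 0 ≤ c) (hd : 0 ≤ d) :
    mixedVol2 ({x} + parallelogram u v a b) ({y} + parallelogram u v c d)
      = (a * d + b * c) / 2 * |(EuclideanSpace.basisFun (Fin 2) ℝ).toBasis.det ![u, v]| := by
  rw [mixedVol2, singleton_add_add_singleton_add, parallelogram_add_parallelogram u v ha hb hc hd,
    volume_singleton_add_parallelogram, volume_singleton_add_parallelogram,
    volume_singleton_add_parallelogram, abs_of_nonneg (mul_nonneg ha hb),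
    abs_of_nonneg (mul_nonneg hc hd), abs_of_nonneg (by positivity : 0 ≤ (a + c) * (b + d))]
  ring

/-- Equality case of Theorem 6.1: if `K` and `L` are segments and
`D = λ₁K + λ₂L`, then `V(K,L)·vol(D) = 2·V(K,D)·V(L,D)`. -/
theorem isomorphic_bezout_plane_equality
    (p q s t : EuclideanSpace ℝ (Fin 2)) (lam₁ lam₂ : ℝ)
    (h₁ : 0 ≤ lam₁) (h₂ : 0 ≤ lam₂)
    (K L D : Set (EuclideanSpace ℝ (Fin 2)))
    (hK : K = segment ℝ p q) (hL : L = segment ℝ s t)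
    (hD : D = lam₁ • K + lam₂ • L) :
    mixedVol2 K L * (volume D).toReal = 2 * mixedVol2 K D * mixedVol2 L D := by
  have hK' : K = {p} + parallelogram (q - p) (t - s) 1 0 := by
    rw [hK, parallelogram_one_zero, segment_eq_singleton_add]
  have hL' : L = {s} + parallelogram (q - p) (t - s) 0 1 := by
    rw [hL, parallelogram_zero_one, segment_eq_singleton_add]
  have hD' : D = {lam₁ • p + lam₂ • s} + parallelogram (q - p) (t - s) lam₁ lam₂ := by
    rw [hD, hK', hL', smul_add, smul_add, Set.smul_set_singleton, Set.smul_set_singleton,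
      smul_parallelogram, smul_parallelogram, singleton_add_add_singleton_add]
    simp only [mul_one, mul_zero]
    rw [parallelogram_add_parallelogram _ _ h₁ le_rfl le_rfl h₂, add_zero, zero_add]
  rw [hD', hK', hL',
    mixedVol2_singleton_add_parallelogram _ _ _ _ zero_le_one le_rfl le_rfl zero_le_one,
    mixedVol2_singleton_add_parallelogram _ _ _ _ zero_le_one le_rfl h₁ h₂,
    mixedVol2_singleton_add_parallelogram _ _ _ _ le_rfl zero_le_one h₁ h₂,
    volume_singleton_add_parallelogram, abs_of_nonneg (mul_nonneg h₁ h₂)]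
  ring
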